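/- Every derivation of v_n = s_{n,1} s_{n,2} ... s_{n,n-1} from u_n = s_{1,1} s_{2,1} ... s_{n,1} by braid relations uses at least C(n,3) = n³/6 + O(n²) relations of type s_i s_{i+1} s_i = s_{i+1} s_i s_{i+1}. -/

import Mathlib

open scoped Classical

noncomputable section

/-- adjacent transposition `s i = (i, i+1)` acting on ℕ (1-indexed positions) -/
def s (i : ℕ) : Equiv.Perm ℕ := Equiv.swap i (i + 1)

/-- permutation represented by a word; letters are applied left to right
(`wperm (u ++ v) = wperm v * wperm u`, i.e. `u` first, then `v`). -/
def wperm (w : List ℕ) : Equiv.Perm ℕ := ((w.map s).reverse).prod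

/-- `w` is an `n`-expression: a word in the letters `s 1, ..., s (n-1)` -/
def IsExpr (n : ℕ) (w : List ℕ) : Prop := ∀ i ∈ w, 1 ≤ i ∧ i + 1 ≤ n

/-- set of inversions of a permutation of `{1,...,n}` -/
def invSet (n : ℕ) (π : Equiv.Perm ℕ) : Finset (ℕ × ℕ) :=
  (Finset.Icc 1 n ×ˢ Finset.Icc 1 n).filter (fun pq => pq.1 < pq.2 ∧ π pq.2 < π pq.1)

/-- a reduced `n`-expression: its length equals the inversion number of the
permutation it represents -/
def ReducedExpr (n : ℕ) (w : List ℕ) : Prop :=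
  IsExpr n w ∧ w.length = (invSet n (wperm w)).card

/-- one application of a braid relation `s i s j s i = s j s i s j`, `|i-j| = 1` -/
inductive StepI : List ℕ → List ℕ → Prop
  | mk (a b : List ℕ) (i j : ℕ) (h : i + 1 = j ∨ j + 1 = i) :
      StepI (a ++ i :: j :: i :: b) (a ++ j :: i :: j :: b)

/-- one application of a commutation relation `s i s j = s j s i`, `|i-j| ≥ 2` -/
inductive StepII : List ℕ → List ℕ → Prop
  | mk (a b : List ℕ) (i j : ℕ) (h : i + 2 ≤ j ∨ j + 2 ≤ i) :
      StepII (a ++ i :: j :: b) (a ++ j :: i :: b)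

def BraidStep (u v : List ℕ) : Prop := StepI u v ∨ StepII u v

/-- `c` is a derivation from `u` to `v` by braid relations -/
def IsDeriv (u v : List ℕ) (c : List (List ℕ)) : Prop :=
  c.Chain' BraidStep ∧ c.head? = some u ∧ c.getLast? = some v

/-- combinatorial distance: minimal number of braid relations transforming `u` into `v` -/
def dist (u v : List ℕ) : ℕ :=
  sInf {k | ∃ c, IsDeriv u v c ∧ c.length = k + 1}

/-- the word `s_{j,i} = s_{j-1} s_{j-2} ... s_i` (empty if `j ≤ i`) -/
def sji (j i : ℕ) : List ℕ := (List.range (j - i)).map (fun k => j - 1 - k)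

/-- the normal word `s_{1,f(1)} s_{2,f(2)} ... s_{n,f(n)}` -/
def normalWord (n : ℕ) (f : ℕ → ℕ) : List ℕ :=
  ((List.range n).map (fun k => sji (k + 1) (f (k + 1)))).flatten

/-- `f : {1,...,n} → {1,...,n}` with `1 ≤ f i ≤ i` for all `i` -/
def IsNormalFun (n : ℕ) (f : ℕ → ℕ) : Prop := ∀ i ∈ Finset.Icc 1 n, 1 ≤ f i ∧ f i ≤ i

/-- names of the successive crossings: the name of a letter is the pair of starting
positions of the two strands crossing there -/
def namesAux : Equiv.Perm ℕ → List ℕ → List (Finset ℕ)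
  | _, [] => []
  | π, i :: rest => ({π⁻¹ i, π⁻¹ (i + 1)} : Finset ℕ) :: namesAux (s i * π) rest

/-- the name sequence `S(w)` of a word -/
def names (w : List ℕ) : List (Finset ℕ) := namesAux 1 w

/-- two entries occur in the same relative order in `S` and `S'` -/
def sameOrder (S S' : List (Finset ℕ)) (a b : Finset ℕ) : Prop :=
  (S.idxOf a < S.idxOf b) ↔ (S'.idxOf a < S'.idxOf b)

/-- `I₃(S,S')`: number of triples `{p,q,r} ⊆ {1,...,n}` such that the relative order of
the three pairs `{p,q}, {p,r}, {q,r}` is not the same in `S` and `S'` -/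
def I3 (n : ℕ) (S S' : List (Finset ℕ)) : ℕ :=
  (((Finset.Icc 1 n).powersetCard 3).filter (fun t =>
    ¬ ∀ a ∈ t.powersetCard 2, ∀ b ∈ t.powersetCard 2, sameOrder S S' a b)).card

/-- `I₂,₂(S,S')`: number of unordered pairs of disjoint pairs in `{1,...,n}` whose
relative order is not the same in `S` and `S'` -/
def I22 (n : ℕ) (S S' : List (Finset ℕ)) : ℕ :=
  ((((Finset.Icc 1 n).powersetCard 2).powersetCard 2).filter (fun P =>
    (∀ a ∈ P, ∀ b ∈ P, a ≠ b → Disjoint a b) ∧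
    ¬ ∀ a ∈ P, ∀ b ∈ P, sameOrder S S' a b)).card

/-- total number of unordered pairs of entries whose relative order differs -/
def InvCount (S S' : List (Finset ℕ)) : ℕ :=
  ((S.toFinset.powersetCard 2).filter (fun P =>
    ¬ ∀ a ∈ P, ∀ b ∈ P, sameOrder S S' a b)).card

/-- number of type I steps in a derivation -/
def countStepsI (c : List (List ℕ)) : ℕ :=
  ((Finset.range (c.length - 1)).filter (fun k => StepI (c.getD k []) (c.getD (k + 1) []))).card

/-- number of type II steps in a derivation -/
def countStepsII (c : List (List ℕ)) : ℕ :=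
  ((Finset.range (c.length - 1)).filter (fun k => StepII (c.getD k []) (c.getD (k + 1) []))).card

/-- position of the strand starting at position `p` after the first `k` letters of `w` -/
def strandPos (w : List ℕ) (p k : ℕ) : ℕ := wperm (w.take k) p

/-- number of unit squares to the right of the `n`-th strand in the braid diagram of `w`,
drawn on an `(n-1) × length w` grid -/
def area (n : ℕ) (w : List ℕ) : ℕ :=
  ((List.range w.length).map (fun k => n - max (strandPos w n k) (strandPos w n (k + 1)))).sum

/-- `u_n = s_{1,1} s_{2,1} ... s_{n,1}` -/
def uWord (n : ℕ) : List ℕ := ((List.range n).map (fun k => sji (k + 1) 1)).flatten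

/-- `v_n = s_{n,1} s_{n,2} ... s_{n,n-1}` -/
def vWord (n : ℕ) : List ℕ := ((List.range (n - 1)).map (fun k => sji n (k + 1))).flatten

/-!
Label each letter of a word by the pair of strands crossing there and, for a set `T` of three
strands, look at the first crossing between two strands of `T`. A commutation swaps two
consecutive crossings of four distinct strands, so it never changes this first crossing; a braid
relation reverses three consecutive crossings of one triple of strands, so it changes the first
crossing of that triple only. In `u_n` the first crossing of `p < q < r` is `{p, q}` and in `v_n`
it is `{q, r}`, so each of the `C(n,3)` triples needs its own type I step.
-/

lemma s_apply_left (i : ℕ) : s i i = i + 1 := Equiv.swap_apply_left _ _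

lemma s_apply_right (i : ℕ) : s i (i + 1) = i := Equiv.swap_apply_right _ _

lemma s_apply_of_ne {i x : ℕ} (h₁ : x ≠ i) (h₂ : x ≠ i + 1) : s i x = x :=
  Equiv.swap_apply_of_ne_of_ne h₁ h₂

lemma s_mul_inv_apply (i : ℕ) (π : Equiv.Perm ℕ) (x : ℕ) : (s i * π)⁻¹ x = π⁻¹ (s i x) := by
  simp [s]

lemma s_braid (i : ℕ) : s i * s (i + 1) * s i = s (i + 1) * s i * s (i + 1) := by
  ext x
  simp only [s, Equiv.Perm.mul_apply, Equiv.swap_apply_def]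
  split_ifs <;> omega

lemma s_comm {i j : ℕ} (h : i + 2 ≤ j ∨ j + 2 ≤ i) : s i * s j = s j * s i := by
  ext x
  simp only [s, Equiv.Perm.mul_apply, Equiv.swap_apply_def]
  split_ifs <;> omega

lemma wperm_cons (i : ℕ) (w : List ℕ) : wperm (i :: w) = wperm w * s i := by
  simp [wperm]

lemma wperm_append (u v : List ℕ) : wperm (u ++ v) = wperm v * wperm u := by
  simp [wperm]

lemma sji_succ {i j : ℕ} (h : i ≤ j) : sji (j + 1) i = j :: sji j i := by
  rw [sji, Nat.sub_add_comm h, List.range_succ_eq_map, List.map_cons, List.map_map, sji]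
  congr 1
  exact List.map_congr_left fun k _ => by simp only [Function.comp_apply]; omega

lemma wperm_sji_apply {i j : ℕ} (h : i ≤ j) (x : ℕ) :
    wperm (sji j i) x = if x = j then i else if i ≤ x ∧ x < j then x + 1 else x := by
  induction j, h using Nat.le_induction generalizing x with
  | base =>
    simp only [sji, Nat.sub_self, List.range_zero, List.map_nil]
    show x = _
    split_ifs <;> omega
  | succ j hij ih =>
    rw [sji_succ hij, wperm_cons, Equiv.Perm.mul_apply]
    by_cases hx : x = j
    · rw [hx, s_apply_left, ih]; split_ifs <;> omega
    by_cases hx' : x = j + 1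
    · rw [hx', s_apply_right, ih]; split_ifs <;> omega
    · rw [s_apply_of_ne hx hx', ih]; split_ifs <;> omega

lemma namesAux_append (u v : List ℕ) (π : Equiv.Perm ℕ) :
    namesAux π (u ++ v) = namesAux π u ++ namesAux (wperm u * π) v := by
  induction u generalizing π with
  | nil => simp [namesAux, wperm]
  | cons i u ih => simp [namesAux, ih, wperm_cons, mul_assoc]

lemma namesAux_sji (π : Equiv.Perm ℕ) {i j : ℕ} (h : i ≤ j) :
    namesAux π (sji j i) = (List.range (j - i)).map (fun t => {π⁻¹ (j - 1 - t), π⁻¹ j}) := by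
  induction j, h using Nat.le_induction generalizing π with
  | base => simp [sji, namesAux]
  | succ j hij ih =>
    rw [sji_succ hij, namesAux, ih, Nat.sub_add_comm hij, List.range_succ_eq_map, List.map_cons,
      List.map_map]
    congr 1
    refine List.map_congr_left fun t ht => ?_
    rw [List.mem_range] at ht
    simp only [Function.comp_apply, s_mul_inv_apply, s_apply_left, Nat.succ_eq_add_one,
      s_apply_of_ne (show j - 1 - t ≠ j by omega) (by omega),
      show j + 1 - 1 - (t + 1) = j - 1 - t by omega]

lemma namesAux_cons_cons_of_commute (π : Equiv.Perm ℕ) {i j : ℕ} (h : i + 2 ≤ j ∨ j + 2 ≤ i)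
    (b : List ℕ) :
    namesAux π (i :: j :: b) =
      {π⁻¹ i, π⁻¹ (i + 1)} :: {π⁻¹ j, π⁻¹ (j + 1)} :: namesAux (s j * s i * π) b := by
  simp only [namesAux, s_mul_inv_apply, mul_assoc,
    s_apply_of_ne (show j ≠ i by omega) (show j ≠ i + 1 by omega),
    s_apply_of_ne (show j + 1 ≠ i by omega) (show j + 1 ≠ i + 1 by omega)]

lemma namesAux_braid (π : Equiv.Perm ℕ) (m : ℕ) (b : List ℕ) :
    namesAux π (m :: (m + 1) :: m :: b) =
      {π⁻¹ m, π⁻¹ (m + 1)} :: {π⁻¹ m, π⁻¹ (m + 2)} :: {π⁻¹ (m + 1), π⁻¹ (m + 2)} ::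
        namesAux (s m * s (m + 1) * s m * π) b := by
  simp only [namesAux, s_mul_inv_apply, s_apply_left, s_apply_right, mul_assoc,
    s_apply_of_ne (show m + 1 + 1 ≠ m by omega) (show m + 1 + 1 ≠ m + 1 by omega),
    s_apply_of_ne (show m ≠ m + 1 by omega) (show m ≠ m + 1 + 1 by omega)]

lemma namesAux_braid' (π : Equiv.Perm ℕ) (m : ℕ) (b : List ℕ) :
    namesAux π ((m + 1) :: m :: (m + 1) :: b) =
      {π⁻¹ (m + 1), π⁻¹ (m + 2)} :: {π⁻¹ m, π⁻¹ (m + 2)} :: {π⁻¹ m, π⁻¹ (m + 1)} ::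
        namesAux (s (m + 1) * s m * s (m + 1) * π) b := by
  simp only [namesAux, s_mul_inv_apply, s_apply_left, s_apply_right, mul_assoc,
    s_apply_of_ne (show m + 1 + 1 ≠ m by omega) (show m + 1 + 1 ≠ m + 1 by omega),
    s_apply_of_ne (show m ≠ m + 1 by omega) (show m ≠ m + 1 + 1 by omega)]

lemma List.find?_cons_cons_comm {α : Type*} {p : α → Bool} {x y : α} (l : List α)
    (h : ¬ (p x ∧ p y)) : (x :: y :: l).find? p = (y :: x :: l).find? p := by
  cases hx : p x <;> cases hy : p y <;> simp_all

lemma List.find?_cons_cons_cons_reverse {α : Type*} {p : α → Bool} {x y z : α} (l : List α)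
    (hxy : ¬ (p x ∧ p y)) (hxz : ¬ (p x ∧ p z)) (hyz : ¬ (p y ∧ p z)) :
    (x :: y :: z :: l).find? p = (z :: y :: x :: l).find? p := by
  cases hx : p x <;> cases hy : p y <;> cases hz : p z <;> simp_all

def firstCrossing (T : Finset ℕ) (w : List ℕ) : Option (Finset ℕ) :=
  (names w).find? (· ⊆ T)

lemma firstCrossing_eq_of_stepII {u v : List ℕ} (h : StepII u v) {T : Finset ℕ}
    (hT : T.card ≤ 3) : firstCrossing T u = firstCrossing T v := by
  obtain ⟨a, b, i, j, hij⟩ := h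
  simp only [firstCrossing, names, namesAux_append, namesAux_cons_cons_of_commute _ hij,
    namesAux_cons_cons_of_commute _ hij.symm, s_comm hij, List.find?_append]
  set π := wperm a * 1
  congr 1
  refine List.find?_cons_cons_comm _ fun ⟨hi, hj⟩ => ?_
  simp only [decide_eq_true_eq] at hi hj
  have hdisj : Disjoint ({π⁻¹ i, π⁻¹ (i + 1)} : Finset ℕ) {π⁻¹ j, π⁻¹ (j + 1)} := by
    simp only [Finset.disjoint_left, Finset.mem_insert, Finset.mem_singleton, not_or,
      forall_eq_or_imp, forall_eq, EmbeddingLike.apply_eq_iff_eq]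
    omega
  have hcard := Finset.card_le_card (Finset.union_subset hi hj)
  rw [Finset.card_union_of_disjoint hdisj, Finset.card_pair (by simp),
    Finset.card_pair (by simp)] at hcard
  omega

lemma subsingleton_firstCrossing_ne_of_braid (a b : List ℕ) (m : ℕ) :
    {T : Finset ℕ | T.card ≤ 3 ∧ firstCrossing T (a ++ m :: (m + 1) :: m :: b) ≠
      firstCrossing T (a ++ (m + 1) :: m :: (m + 1) :: b)}.Subsingleton := by
  set π := wperm a * 1
  refine Set.subsingleton_of_forall_eq {π⁻¹ m, π⁻¹ (m + 1), π⁻¹ (m + 2)} ?_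
  rintro T ⟨hT, hne⟩
  by_contra hT₀
  have hnot : ¬ (π⁻¹ m ∈ T ∧ π⁻¹ (m + 1) ∈ T ∧ π⁻¹ (m + 2) ∈ T) := by
    rintro ⟨h₀, h₁, h₂⟩
    refine hT₀ (Finset.eq_of_subset_of_card_le ?_ ?_).symm
    · simp only [Finset.insert_subset_iff, Finset.singleton_subset_iff]
      exact ⟨h₀, h₁, h₂⟩
    · rw [Finset.card_eq_three.mpr ⟨_, _, _, by simp, by simp, by simp, rfl⟩]
      exact hT
  refine hne ?_
  simp only [firstCrossing, names, namesAux_append, namesAux_braid, namesAux_braid', s_braid,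
    List.find?_append]
  congr 1
  apply List.find?_cons_cons_cons_reverse <;>
  · simp only [decide_eq_true_eq, Finset.insert_subset_iff, Finset.singleton_subset_iff]
    tauto

lemma subsingleton_firstCrossing_ne_of_stepI {u v : List ℕ} (h : StepI u v) :
    {T : Finset ℕ | T.card ≤ 3 ∧ firstCrossing T u ≠ firstCrossing T v}.Subsingleton := by
  obtain ⟨a, b, i, j, rfl | rfl⟩ := h
  · exact subsingleton_firstCrossing_ne_of_braid a b i
  · simpa only [ne_comm] using subsingleton_firstCrossing_ne_of_braid a b j

def changedTriples (n : ℕ) (u v : List ℕ) : Finset (Finset ℕ) :=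
  ((Finset.Icc 1 n).powersetCard 3).filter fun T => firstCrossing T u ≠ firstCrossing T v

lemma changedTriples_self (n : ℕ) (u : List ℕ) : changedTriples n u u = ∅ := by
  simp [changedTriples]

lemma changedTriples_subset_union (n : ℕ) (u v w : List ℕ) :
    changedTriples n u w ⊆ changedTriples n u v ∪ changedTriples n v w := by
  intro T
  simp only [changedTriples, Finset.mem_union, Finset.mem_filter]
  by_cases h : firstCrossing T u = firstCrossing T v <;> simp_all

lemma card_changedTriples_le_of_braidStep (n : ℕ) {u v : List ℕ} (h : BraidStep u v) :
    (changedTriples n u v).card ≤ if StepI u v then 1 else 0 := by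
  have mem {T : Finset ℕ} (hT : T ∈ changedTriples n u v) :
      T.card ≤ 3 ∧ firstCrossing T u ≠ firstCrossing T v :=
    ⟨(Finset.mem_powersetCard.mp (Finset.mem_filter.mp hT).1).2.le, (Finset.mem_filter.mp hT).2⟩
  split_ifs with hI
  · exact Finset.card_le_one.mpr fun T hT T' hT' =>
      subsingleton_firstCrossing_ne_of_stepI hI (mem hT) (mem hT')
  · refine (Finset.card_eq_zero.mpr (Finset.eq_empty_of_forall_notMem fun T hT => ?_)).le
    exact (mem hT).2 (firstCrossing_eq_of_stepII (h.resolve_left hI) (mem hT).1)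

lemma countStepsI_cons_cons (x y : List ℕ) (c : List (List ℕ)) :
    countStepsI (x :: y :: c) = (if StepI x y then 1 else 0) + countStepsI (y :: c) := by
  simp only [countStepsI, List.length_cons, Nat.add_sub_cancel, Finset.card_filter,
    Finset.sum_range_succ', List.getD_cons_succ, List.getD_cons_zero]
  exact add_comm _ _

lemma card_changedTriples_le_countStepsI (n : ℕ) {u v : List ℕ} {c : List (List ℕ)}
    (hc : IsDeriv u v c) : (changedTriples n u v).card ≤ countStepsI c := by
  induction c generalizing u with
  | nil => simp [IsDeriv] at hc
  | cons x c ih =>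
    obtain ⟨hchain, hhead, hlast⟩ := hc
    obtain rfl : x = u := by simpa using hhead
    cases c with
    | nil =>
      obtain rfl : x = v := by simpa using hlast
      simp [changedTriples_self]
    | cons y c =>
      obtain ⟨hstep, hchain⟩ := List.isChain_cons_cons.mp hchain
      have htail : IsDeriv y v (y :: c) := ⟨hchain, rfl, by simpa using hlast⟩
      rw [countStepsI_cons_cons]
      calc (changedTriples n x v).card
          ≤ (changedTriples n x y).card + (changedTriples n y v).card :=
            (Finset.card_le_card (changedTriples_subset_union n x y v)).trans
              (Finset.card_union_le _ _)
        _ ≤ _ := Nat.add_le_add (card_changedTriples_le_of_braidStep n hstep) (ih htail)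

/-- Positions of the strands after the first `k` blocks `s_{n,1} ⋯ s_{n,k}` of `v_n`; for `k = n`
it is the flip, the permutation of `u_n`. -/
def partialFlip (n k : ℕ) : Equiv.Perm ℕ where
  toFun i := if 1 ≤ i ∧ i ≤ n then (if i ≤ n - k then i + k else n + 1 - i) else i
  invFun j := if 1 ≤ j ∧ j ≤ n then (if j ≤ k then n + 1 - j else j - k) else j
  left_inv i := by dsimp only; split_ifs <;> omega
  right_inv j := by dsimp only; split_ifs <;> omega

lemma partialFlip_apply (n k i : ℕ) :
    partialFlip n k i = if 1 ≤ i ∧ i ≤ n then (if i ≤ n - k then i + k else n + 1 - i) else i :=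
  rfl

lemma partialFlip_inv_apply (n k j : ℕ) :
    (partialFlip n k)⁻¹ j = if 1 ≤ j ∧ j ≤ n then (if j ≤ k then n + 1 - j else j - k) else j :=
  rfl

lemma partialFlip_zero (n : ℕ) : partialFlip n 0 = 1 := by
  ext i
  rw [partialFlip_apply, Equiv.Perm.one_apply]
  split_ifs <;> omega

def vPrefix (n k : ℕ) : List ℕ := ((List.range k).map fun t => sji n (t + 1)).flatten

lemma vWord_eq_vPrefix (n : ℕ) : vWord n = vPrefix n (n - 1) := rfl

lemma uWord_succ (n : ℕ) : uWord (n + 1) = uWord n ++ sji (n + 1) 1 := by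
  simp [uWord, List.range_succ]

lemma vPrefix_succ (n k : ℕ) : vPrefix n (k + 1) = vPrefix n k ++ sji n (k + 1) := by
  simp [vPrefix, List.range_succ]

lemma wperm_uWord (n : ℕ) : wperm (uWord n) = partialFlip n n := by
  induction n with
  | zero => exact (partialFlip_zero 0).symm
  | succ n ih =>
    ext i
    rw [uWord_succ, wperm_append, ih, Equiv.Perm.mul_apply, wperm_sji_apply (by omega),
      partialFlip_apply, partialFlip_apply]
    split_ifs <;> omega

lemma wperm_vPrefix {n k : ℕ} (hk : k ≤ n) : wperm (vPrefix n k) = partialFlip n k := by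
  induction k with
  | zero => exact (partialFlip_zero n).symm
  | succ k ih =>
    ext i
    rw [vPrefix_succ, wperm_append, ih (by omega), Equiv.Perm.mul_apply, wperm_sji_apply hk,
      partialFlip_apply, partialFlip_apply]
    split_ifs <;> omega

lemma names_uWord_succ (n : ℕ) :
    names (uWord (n + 1)) = names (uWord n) ++ (List.range n).map fun t => {t + 1, n + 1} := by
  rw [names, uWord_succ, namesAux_append, mul_one, wperm_uWord, namesAux_sji _ (by omega), names]
  refine congrArg _ (List.map_congr_left fun t ht => ?_)
  rw [List.mem_range] at ht
  have h₁ : (partialFlip n n)⁻¹ (n + 1 - 1 - t) = t + 1 := by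
    rw [partialFlip_inv_apply]; split_ifs <;> omega
  have h₂ : (partialFlip n n)⁻¹ (n + 1) = n + 1 := by
    rw [partialFlip_inv_apply]; split_ifs <;> omega
  rw [h₁, h₂]

lemma names_vPrefix_succ {n k : ℕ} (hk : k < n) :
    names (vPrefix n (k + 1)) =
      names (vPrefix n k) ++ (List.range (n - (k + 1))).map fun t => {n - (k + 1) - t, n - k} := by
  rw [names, vPrefix_succ, namesAux_append, mul_one, wperm_vPrefix hk.le, namesAux_sji _ hk,
    names]
  refine congrArg _ (List.map_congr_left fun t ht => ?_)
  rw [List.mem_range] at ht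
  have h₁ : (partialFlip n k)⁻¹ (n - 1 - t) = n - (k + 1) - t := by
    rw [partialFlip_inv_apply]; split_ifs <;> omega
  have h₂ : (partialFlip n k)⁻¹ n = n - k := by
    rw [partialFlip_inv_apply]; split_ifs <;> omega
  rw [h₁, h₂]

lemma pair_subset_triple_iff {a b p q r : ℕ} :
    ({a, b} : Finset ℕ) ⊆ {p, q, r} ↔ (a = p ∨ a = q ∨ a = r) ∧ (b = p ∨ b = q ∨ b = r) := by
  simp [Finset.insert_subset_iff]

lemma firstCrossing_uWord {p q r : ℕ} (hp : 1 ≤ p) (hpq : p < q) (hqr : q < r) (n : ℕ) :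
    firstCrossing {p, q, r} (uWord n) = if q ≤ n then some {p, q} else none := by
  induction n with
  | zero => rw [if_neg (by omega)]; rfl
  | succ n ih =>
    rw [firstCrossing, names_uWord_succ, List.find?_append, ← firstCrossing, ih, List.find?_map]
    by_cases hqn : q ≤ n
    · simp [hqn, show q ≤ n + 1 by omega]
    rw [if_neg hqn, Option.none_or]
    by_cases hq : q = n + 1
    · rw [if_pos hq.le, (List.find?_range_eq_some (i := p - 1)).mpr]
      · simp [Nat.sub_add_cancel hp, hq]
      · refine ⟨?_, List.mem_range.mpr (by omega), fun j hj => ?_⟩ <;>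
          simp only [Function.comp_apply, pair_subset_triple_iff, decide_eq_true_eq,
            Bool.not_eq_true', decide_eq_false_iff_not] <;> omega
    · rw [if_neg (by omega), Option.map_eq_none_iff, List.find?_range_eq_none]
      intro j hj
      simp only [Function.comp_apply, pair_subset_triple_iff, Bool.not_eq_true',
        decide_eq_false_iff_not]
      omega

lemma firstCrossing_vPrefix {n p q r : ℕ} (hp : 1 ≤ p) (hpq : p < q) (hqr : q < r) (hrn : r ≤ n)
    {k : ℕ} (hk : k ≤ n) :
    firstCrossing {p, q, r} (vPrefix n k) = if n - r < k then some {q, r} else none := by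
  induction k with
  | zero => rfl
  | succ k ih =>
    rw [firstCrossing, names_vPrefix_succ hk, List.find?_append, ← firstCrossing, ih (by omega),
      List.find?_map]
    by_cases hrk : n - r < k
    · simp [hrk, show n - r < k + 1 by omega]
    rw [if_neg hrk, Option.none_or]
    by_cases hr : k = n - r
    · rw [if_pos (by omega), (List.find?_range_eq_some (i := r - 1 - q)).mpr]
      · simp only [Option.map_some, hr,
          show n - (n - r + 1) - (r - 1 - q) = q by omega, show n - (n - r) = r by omega]
      · refine ⟨?_, List.mem_range.mpr (by omega), fun j hj => ?_⟩ <;>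
          simp only [Function.comp_apply, pair_subset_triple_iff, decide_eq_true_eq,
            Bool.not_eq_true', decide_eq_false_iff_not] <;> omega
    · rw [if_neg (by omega), Option.map_eq_none_iff, List.find?_range_eq_none]
      intro j hj
      simp only [Function.comp_apply, pair_subset_triple_iff, Bool.not_eq_true',
        decide_eq_false_iff_not]
      omega

lemma Finset.exists_lt_lt_eq_of_card_eq_three {α : Type*} [LinearOrder α] {T : Finset α}
    (hT : T.card = 3) :
    ∃ p q r, p < q ∧ q < r ∧ T = {p, q, r} := by
  refine ⟨T.orderEmbOfFin hT 0, T.orderEmbOfFin hT 1, T.orderEmbOfFin hT 2, by simp, by simp, ?_⟩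
  conv_lhs => rw [← T.image_orderEmbOfFin_univ hT]
  simp [Fin.univ_succ]

lemma changedTriples_uWord_vWord (n : ℕ) :
    changedTriples n (uWord n) (vWord n) = (Finset.Icc 1 n).powersetCard 3 := by
  refine Finset.filter_true_of_mem fun T hT => ?_
  obtain ⟨hsub, hcard⟩ := Finset.mem_powersetCard.mp hT
  obtain ⟨p, q, r, hpq, hqr, rfl⟩ := Finset.exists_lt_lt_eq_of_card_eq_three hcard
  have hp : 1 ≤ p := (Finset.mem_Icc.mp (hsub (by simp))).1
  have hrn : r ≤ n := (Finset.mem_Icc.mp (hsub (by simp))).2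
  rw [firstCrossing_uWord hp hpq hqr, if_pos (by omega), vWord_eq_vPrefix,
    firstCrossing_vPrefix hp hpq hqr hrn (by omega), if_pos (by omega), ne_eq,
    Option.some.injEq]
  intro h
  have : r ∈ ({p, q} : Finset ℕ) := h ▸ by simp
  simp only [Finset.mem_insert, Finset.mem_singleton] at this
  omega

/-- Every derivation of `v_n` from `u_n` by braid relations uses at least
`C(n,3)` relations of type I. -/
theorem flip_typeI_lower_bound (n : ℕ) (c : List (List ℕ))
    (hc : IsDeriv (uWord n) (vWord n) c) :
    countStepsI c ≥ n.choose 3 := by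
  calc n.choose 3 = (changedTriples n (uWord n) (vWord n)).card := by
        rw [changedTriples_uWord_vWord, Finset.card_powersetCard, Nat.card_Icc,
          Nat.add_sub_cancel]
    _ ≤ countStepsI c := card_changedTriples_le_countStepsI n hc

end
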